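/- arXiv:2604.22533 — 2 statements merged into one kernel-verified Lean document; each statement's English description precedes it below -/
import Mathlib

section
/- Craig's formula: for x ≥ 0, Q(x) = (1/π)·∫₀^(π/2) exp(−x²/(2·sin²ψ)) dψ, where Q is the Gaussian tail function. -/
/-!
Substituting `ψ = π/2 - arctan t` turns Craig's integral into Owen's integral
`∫₀^∞ e^{-x²(1+t²)/2} / (1+t²) dt`. Differentiating under the integral sign, its derivative at
`x > 0` is `-x e^{-x²/2} ∫₀^∞ e^{-x²t²/2} dt = -√(2π)/2 · e^{-x²/2}`, which is also the derivative
of `π Q`. Both functions tend to `0` at infinity, so they agree for `x > 0`, and at `x = 0` both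
equal `π/2`.
-/

open Real MeasureTheory

/-- Gaussian tail function Q(x) = (1/√(2π)) ∫ₓ^∞ e^(−t²/2) dt. -/
noncomputable def gaussQ (x : ℝ) : ℝ :=
  (1 / Real.sqrt (2 * π)) * ∫ t in Set.Ioi x, Real.exp (-t ^ 2 / 2)

open Set Filter Topology

theorem eqOn_Ioi_of_hasDerivAt_of_tendsto_atTop {f g f' : ℝ → ℝ} {a l : ℝ}
    (hf : ∀ x ∈ Ioi a, HasDerivAt f (f' x) x) (hg : ∀ x ∈ Ioi a, HasDerivAt g (f' x) x)
    (hfl : Tendsto f atTop (𝓝 l)) (hgl : Tendsto g atTop (𝓝 l)) : EqOn f g (Ioi a) := by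
  obtain ⟨c, hc⟩ := isOpen_Ioi.exists_eq_add_of_deriv_eq isPreconnected_Ioi
    (fun x hx => (hf x hx).differentiableAt.differentiableWithinAt)
    (fun x hx => (hg x hx).differentiableAt.differentiableWithinAt)
    (fun x hx => (hf x hx).deriv.trans (hg x hx).deriv.symm)
  have hc0 : l = l + c := tendsto_nhds_unique hfl <| (hgl.add_const c).congr' <|
    (eventually_gt_atTop a).mono fun x hx => (hc hx).symm
  intro x hx
  simpa [show c = 0 by linarith] using hc hx

theorem hasDerivAt_integral_Ioi {E : Type*} [NormedAddCommGroup E] [NormedSpace ℝ E]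
    [CompleteSpace E] {f : ℝ → E} (hf : Continuous f) (hfi : Integrable f) (x : ℝ) :
    HasDerivAt (fun a => ∫ t in Ioi a, f t) (-f x) x := by
  have h : (fun a => ∫ t in Ioi a, f t) = fun a => (∫ t in Ioi 0, f t) - ∫ t in 0..a, f t := by
    ext a
    rw [← intervalIntegral.integral_Ioi_sub_Ioi' hfi.integrableOn hfi.integrableOn, sub_sub_cancel]
  rw [h]
  exact ((hf.integral_hasStrictDerivAt 0 x).hasDerivAt).const_sub _

theorem integrable_exp_neg_sq_div_two : Integrable fun t : ℝ => exp (-t ^ 2 / 2) := by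
  simp_rw [show ∀ t : ℝ, -t ^ 2 / 2 = -(1 / 2) * t ^ 2 by intro t; ring]
  exact integrable_exp_neg_mul_sq (by norm_num)

theorem integral_Ioi_exp_neg_sq_div_two : ∫ t in Ioi (0 : ℝ), exp (-t ^ 2 / 2) = √(2 * π) / 2 := by
  simp_rw [show ∀ t : ℝ, -t ^ 2 / 2 = -(1 / 2) * t ^ 2 by intro t; ring, integral_gaussian_Ioi]
  norm_num [div_eq_mul_inv, mul_comm]

theorem gaussQ_zero : gaussQ 0 = 1 / 2 := by
  have : √(2 * π) ≠ 0 := by positivity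
  rw [gaussQ, integral_Ioi_exp_neg_sq_div_two]
  field_simp

theorem hasDerivAt_gaussQ (x : ℝ) : HasDerivAt gaussQ (-(exp (-x ^ 2 / 2) / √(2 * π))) x := by
  have h := (hasDerivAt_integral_Ioi (by fun_prop) integrable_exp_neg_sq_div_two x).const_mul
    (1 / √(2 * π))
  rwa [mul_neg, one_div_mul_eq_div] at h

theorem tendsto_gaussQ_atTop : Tendsto gaussQ atTop (𝓝 0) := by
  have h := (tendsto_integral_Ioi_zero (f := fun t : ℝ => exp (-t ^ 2 / 2)) (μ := volume)
    tendsto_id).const_mul (1 / √(2 * π))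
  rwa [mul_zero] at h

theorem image_arctan_Ioi_zero : arctan '' Ioi 0 = Ioo 0 (π / 2) := by
  ext θ
  constructor
  · rintro ⟨t, ht, rfl⟩
    exact ⟨arctan_pos.2 ht, arctan_lt_pi_div_two t⟩
  · intro hθ
    exact ⟨tan θ, tan_pos_of_pos_of_lt_pi_div_two hθ.1 hθ.2,
      arctan_tan (by linarith [hθ.1, pi_pos]) hθ.2⟩

theorem integral_Ioo_zero_pi_div_two_eq_integral_Ioi_comp_arctan {E : Type*}
    [NormedAddCommGroup E] [NormedSpace ℝ E] (g : ℝ → E) :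
    ∫ θ in Ioo 0 (π / 2), g θ = ∫ t in Ioi 0, (1 + t ^ 2)⁻¹ • g (arctan t) := by
  rw [← image_arctan_Ioi_zero, integral_image_eq_integral_abs_deriv_smul measurableSet_Ioi
    (fun t _ => (hasDerivAt_arctan' t).hasDerivWithinAt) arctan_strictMono.injective.injOn]
  have habs : ∀ t : ℝ, |(1 + t ^ 2)⁻¹| = (1 + t ^ 2)⁻¹ := fun t => abs_of_pos (by positivity)
  simp_rw [habs]

noncomputable def owenKernel (x t : ℝ) : ℝ := (1 + t ^ 2)⁻¹ * exp (-(x ^ 2 * (1 + t ^ 2)) / 2)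

/-- Owen's `T` function at `a = ∞`: `owenIntegral x = 2π · T(x, ∞)`. -/
noncomputable def owenIntegral (x : ℝ) : ℝ := ∫ t in Ioi 0, owenKernel x t

theorem integral_exp_div_sin_sq_eq_owenIntegral (x : ℝ) :
    ∫ ψ in (0 : ℝ)..(π / 2), exp (-(x ^ 2) / (2 * sin ψ ^ 2)) = owenIntegral x := by
  have hreflect := intervalIntegral.integral_comp_sub_left
    (fun ψ => exp (-(x ^ 2) / (2 * sin ψ ^ 2))) (a := 0) (b := π / 2) (π / 2)
  rw [sub_self, sub_zero] at hreflect
  rw [← hreflect, intervalIntegral.integral_of_le (by positivity), integral_Ioc_eq_integral_Ioo,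
    integral_Ioo_zero_pi_div_two_eq_integral_Ioi_comp_arctan, owenIntegral]
  unfold owenKernel
  congr 1 with t
  have hcos : cos (arctan t) ^ 2 = (1 + t ^ 2)⁻¹ := by
    rw [cos_arctan, div_pow, sq_sqrt (by positivity), one_pow, one_div]
  rw [sin_pi_div_two_sub, hcos, smul_eq_mul]
  field_simp

theorem owenIntegral_zero : owenIntegral 0 = π / 2 := by
  simp [owenIntegral, owenKernel]

theorem integral_Ioi_exp_neg_sq_mul_one_add_sq {x : ℝ} (hx : 0 < x) :
    ∫ t in Ioi 0, exp (-(x ^ 2 * (1 + t ^ 2)) / 2) = √(2 * π) / (2 * x) * exp (-x ^ 2 / 2) := by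
  have hsplit : ∀ t : ℝ, exp (-(x ^ 2 * (1 + t ^ 2)) / 2)
      = exp (-x ^ 2 / 2) * exp (-(x ^ 2 / 2) * t ^ 2) := by
    intro t
    rw [← exp_add]
    ring_nf
  simp_rw [hsplit, integral_const_mul, integral_gaussian_Ioi,
    show π / (x ^ 2 / 2) = 2 * π / x ^ 2 by field_simp, sqrt_div' _ (sq_nonneg x), sqrt_sq hx.le]
  ring

theorem abs_mul_exp_neg_sq_mul_one_add_sq_le {x₀ x : ℝ} (hx : x ∈ Metric.ball x₀ (x₀ / 2))
    (t : ℝ) : |x * exp (-(x ^ 2 * (1 + t ^ 2)) / 2)| ≤ 2 * x₀ * exp (-(x₀ ^ 2 / 8) * t ^ 2) := by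
  rw [Metric.mem_ball, dist_comm, Real.dist_eq, abs_lt] at hx
  obtain ⟨hlo, hhi⟩ := hx
  have hx : 0 < x := by linarith
  rw [abs_mul, abs_of_pos hx, abs_exp]
  have hx₀ : x₀ ^ 2 ≤ 4 * x ^ 2 := by nlinarith
  have hexp : -(x ^ 2 * (1 + t ^ 2)) / 2 ≤ -(x₀ ^ 2 / 8) * t ^ 2 := by
    nlinarith [mul_le_mul_of_nonneg_right hx₀ (sq_nonneg t), sq_nonneg x]
  exact mul_le_mul (by linarith) (exp_le_exp.2 hexp) (exp_pos _).le (by linarith)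

theorem continuous_owenKernel (x : ℝ) : Continuous (owenKernel x) :=
  ((continuous_const.add (continuous_pow 2)).inv₀
    fun t => (by positivity : (0 : ℝ) < 1 + t ^ 2).ne').mul (by fun_prop)

theorem abs_owenKernel_le (x t : ℝ) : |owenKernel x t| ≤ (1 + t ^ 2)⁻¹ := by
  rw [owenKernel, abs_of_pos (by positivity)]
  refine mul_le_of_le_one_right (by positivity) (exp_le_one_iff.2 ?_)
  have : 0 ≤ x ^ 2 * (1 + t ^ 2) := by positivity
  linarith

theorem hasDerivAt_owenKernel (x t : ℝ) :
    HasDerivAt (owenKernel · t) (-x * exp (-(x ^ 2 * (1 + t ^ 2)) / 2)) x := by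
  have h := (((hasDerivAt_pow 2 x).mul_const (1 + t ^ 2)).neg.div_const 2).exp.const_mul
    (1 + t ^ 2)⁻¹
  refine h.congr_deriv ?_
  simp only [Pi.neg_apply]
  field_simp
  ring

theorem hasDerivAt_owenIntegral {x₀ : ℝ} (hx₀ : 0 < x₀) :
    HasDerivAt owenIntegral (-(√(2 * π) / 2 * exp (-x₀ ^ 2 / 2))) x₀ := by
  have hint : Integrable (owenKernel x₀) (volume.restrict (Ioi 0)) :=
    integrable_inv_one_add_sq.integrableOn.mono' (continuous_owenKernel x₀).aestronglyMeasurable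
      (ae_of_all _ (abs_owenKernel_le x₀))
  have hbound : Integrable (fun t : ℝ => 2 * x₀ * exp (-(x₀ ^ 2 / 8) * t ^ 2))
      (volume.restrict (Ioi 0)) :=
    ((integrable_exp_neg_mul_sq (by positivity)).const_mul _).integrableOn
  have hderiv_meas : Continuous fun t : ℝ => -x₀ * exp (-(x₀ ^ 2 * (1 + t ^ 2)) / 2) := by
    fun_prop
  have h := (hasDerivAt_integral_of_dominated_loc_of_deriv_le
    (Metric.ball_mem_nhds x₀ (half_pos hx₀))
    (Eventually.of_forall fun x => (continuous_owenKernel x).aestronglyMeasurable) hint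
    hderiv_meas.aestronglyMeasurable
    (ae_of_all _ fun t x hx => by simpa only [neg_mul, norm_neg, norm_eq_abs] using
      abs_mul_exp_neg_sq_mul_one_add_sq_le hx t)
    hbound (ae_of_all _ fun t x _ => hasDerivAt_owenKernel x t)).2
  rwa [integral_const_mul, integral_Ioi_exp_neg_sq_mul_one_add_sq hx₀,
    show -x₀ * (√(2 * π) / (2 * x₀) * exp (-x₀ ^ 2 / 2)) = -(√(2 * π) / 2 * exp (-x₀ ^ 2 / 2)) by
      field_simp] at h

theorem tendsto_owenKernel_atTop (t : ℝ) : Tendsto (owenKernel · t) atTop (𝓝 0) := by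
  have hsq : Tendsto (fun x : ℝ => x ^ 2 * (1 + t ^ 2)) atTop atTop :=
    (tendsto_pow_atTop two_ne_zero).atTop_mul_const (by positivity)
  have h := (tendsto_exp_atBot.comp
    ((tendsto_neg_atTop_atBot.comp hsq).atBot_div_const two_pos)).const_mul (1 + t ^ 2)⁻¹
  rwa [mul_zero] at h

theorem tendsto_owenIntegral_atTop : Tendsto owenIntegral atTop (𝓝 0) := by
  have h := tendsto_integral_filter_of_dominated_convergence (μ := volume.restrict (Ioi 0)) _
    (Eventually.of_forall fun x => (continuous_owenKernel x).aestronglyMeasurable)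
    (Eventually.of_forall fun x => ae_of_all _ (abs_owenKernel_le x))
    integrable_inv_one_add_sq.integrableOn (ae_of_all _ tendsto_owenKernel_atTop)
  rwa [integral_zero] at h

/-- Craig's formula: Q(x) = (1/π) ∫₀^{π/2} exp(−x²/(2 sin²ψ)) dψ for x ≥ 0. -/
theorem craig_formula (x : ℝ) (hx : 0 ≤ x) :
    gaussQ x = (1 / π) * ∫ ψ in (0:ℝ)..(π / 2), Real.exp (-(x ^ 2) / (2 * Real.sin ψ ^ 2)) := by
  have hderiv (y : ℝ) :
      HasDerivAt (fun y => π * gaussQ y) (-(√(2 * π) / 2 * exp (-y ^ 2 / 2))) y := by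
    refine ((hasDerivAt_gaussQ y).const_mul π).congr_deriv ?_
    field_simp
    rw [sq_sqrt (by positivity)]
  have hlim : Tendsto (fun y => π * gaussQ y) atTop (𝓝 0) := by
    simpa using tendsto_gaussQ_atTop.const_mul π
  have heq : EqOn (fun y => π * gaussQ y) owenIntegral (Ioi 0) :=
    eqOn_Ioi_of_hasDerivAt_of_tendsto_atTop (fun y _ => hderiv y)
      (fun _ hy => hasDerivAt_owenIntegral hy) hlim tendsto_owenIntegral_atTop
  rw [integral_exp_div_sin_sq_eq_owenIntegral]
  rcases hx.eq_or_lt with rfl | hpos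
  · rw [gaussQ_zero, owenIntegral_zero]
    field_simp
  · rw [← heq hpos]
    field_simp
end

section
/- If D is Gamma(α, β)-distributed and σ > 0, then E[Q(√(D/(2σ²)))] = (1/π)·∫₀^{π/2} (sin²ψ/(sin²ψ + γ))^α dψ, where γ = β/(4σ²). -/
/-
Craig's formula Q(x) = (1/π) ∫₀^{π/2} exp(-x²/(2 sin²ψ)) dψ for x ≥ 0 writes the Gaussian tail as
an average of exponentials exp(-c x²), and x² = D/(2σ²) is linear in D. For each ψ the D-average is
then the Laplace transform of the Gamma density, E[exp(-sD)] = (1 + βs)^(-α) with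
s = 1/(4σ² sin²ψ), which is exactly (sin²ψ/(sin²ψ + γ))^α; the kernel is bounded by 1, so the ψ and
D integrals may be exchanged.

Craig's formula itself: exp(-x²/(2a²)) is the tail beyond x of the Rayleigh density with scale a.
Taking a = sin ψ and exchanging the integrals, the inner ψ-integral becomes ∫_{u>0} e^{-(t²+u²)/2} du
after the substitution u = t cot ψ, so it equals √(2π)/2 · e^{-t²/2}.
-/

open Real MeasureTheory Set

open Filter

noncomputable def rayleighPDF (a t : ℝ) : ℝ := t / a ^ 2 * exp (-t ^ 2 / (2 * a ^ 2))

lemma exp_neg_sq_div_le_one (x a : ℝ) : exp (-x ^ 2 / (2 * a ^ 2)) ≤ 1 :=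
  exp_le_one_iff.mpr (div_nonpos_of_nonpos_of_nonneg (neg_nonpos.mpr (sq_nonneg x)) (by positivity))

lemma measurable_rayleighPDF : Measurable (Function.uncurry rayleighPDF) := by
  unfold rayleighPDF; fun_prop

lemma hasDerivAt_neg_exp_neg_sq_div (a t : ℝ) :
    HasDerivAt (fun t => -exp (-t ^ 2 / (2 * a ^ 2))) (rayleighPDF a t) t := by
  refine (((hasDerivAt_pow 2 t).fun_neg.div_const (2 * a ^ 2)).exp).neg.congr_deriv ?_
  unfold rayleighPDF
  ring

lemma integrable_rayleighPDF {a : ℝ} (ha : a ≠ 0) : Integrable (rayleighPDF a) := by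
  have h := (integrable_mul_exp_neg_mul_sq (b := 1 / (2 * a ^ 2)) (by positivity)).const_mul
    (1 / a ^ 2)
  refine h.congr (Eventually.of_forall fun t => ?_)
  simp only [rayleighPDF]
  ring_nf

lemma integral_Ioi_rayleighPDF {a : ℝ} (ha : a ≠ 0) (x : ℝ) :
    ∫ t in Ioi x, rayleighPDF a t = exp (-x ^ 2 / (2 * a ^ 2)) := by
  have hlim : Tendsto (fun t => -exp (-t ^ 2 / (2 * a ^ 2))) atTop (nhds 0) := by
    have h : Tendsto (fun t : ℝ => -t ^ 2 / (2 * a ^ 2)) atTop atBot := by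
      simp_rw [neg_div]
      exact tendsto_neg_atTop_atBot.comp
        ((tendsto_pow_atTop two_ne_zero).atTop_div_const (by positivity))
    simpa using (tendsto_exp_atBot.comp h).neg
  rw [integral_Ioi_of_hasDerivAt_of_tendsto' (fun t _ => hasDerivAt_neg_exp_neg_sq_div a t)
    (integrable_rayleighPDF ha).integrableOn hlim]
  ring

lemma sin_pos_of_mem_Ioo_pi_div_two {ψ : ℝ} (hψ : ψ ∈ Ioo 0 (π / 2)) : 0 < sin ψ :=
  sin_pos_of_mem_Ioo (Ioo_subset_Ioo_right (half_le_self pi_pos.le) hψ)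

lemma hasDerivAt_mul_cos_div_sin (t : ℝ) {ψ : ℝ} (hψ : sin ψ ≠ 0) :
    HasDerivAt (fun ψ => t * cos ψ / sin ψ) (-t / sin ψ ^ 2) ψ := by
  refine (((hasDerivAt_cos ψ).const_mul t).div (hasDerivAt_sin ψ) hψ).congr_deriv ?_
  rw [← mul_one (-t), ← sin_sq_add_cos_sq ψ]
  ring

lemma mul_cos_div_sin_image_Ioo {t : ℝ} (ht : 0 < t) :
    (fun ψ => t * cos ψ / sin ψ) '' Ioo 0 (π / 2) = Ioi 0 := by
  ext u
  constructor
  · rintro ⟨ψ, hψ, rfl⟩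
    have hcos : 0 < cos ψ := cos_pos_of_mem_Ioo ⟨by linarith [hψ.1, pi_pos], hψ.2⟩
    exact div_pos (mul_pos ht hcos) (sin_pos_of_mem_Ioo_pi_div_two hψ)
  · intro hu
    have hu : 0 < u := hu
    refine ⟨arctan (t / u), ⟨arctan_pos.mpr (by positivity), arctan_lt_pi_div_two _⟩, ?_⟩
    simp only [sin_arctan, cos_arctan]
    field_simp

lemma integral_Ioo_rayleighPDF_sin {t : ℝ} (ht : 0 < t) :
    ∫ ψ in Ioo 0 (π / 2), rayleighPDF (sin ψ) t = √(2 * π) / 2 * exp (-t ^ 2 / 2) := by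
  set f := fun ψ => t * cos ψ / sin ψ
  have hderiv : ∀ ψ ∈ Ioo 0 (π / 2), HasDerivAt f (-t / sin ψ ^ 2) ψ := fun ψ hψ =>
    hasDerivAt_mul_cos_div_sin t (sin_pos_of_mem_Ioo_pi_div_two hψ).ne'
  have hanti : AntitoneOn f (Ioo 0 (π / 2)) := by
    refine antitoneOn_of_hasDerivWithinAt_nonpos (f' := fun ψ => -t / sin ψ ^ 2) (convex_Ioo _ _)
      (fun ψ hψ => (hderiv ψ hψ).continuousAt.continuousWithinAt) ?_ ?_ <;> rw [interior_Ioo]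
    · exact fun ψ hψ => (hderiv ψ hψ).hasDerivWithinAt
    · exact fun ψ _ => div_nonpos_of_nonpos_of_nonneg (by linarith) (sq_nonneg _)
  have hsubst := integral_image_eq_integral_deriv_smul_of_antitoneOn measurableSet_Ioo
    (fun ψ hψ => (hderiv ψ hψ).hasDerivWithinAt) hanti (fun u => exp (-(t ^ 2 + u ^ 2) / 2))
  have hgauss : ∫ u in Ioi 0, exp (-(t ^ 2 + u ^ 2) / 2) = √(2 * π) / 2 * exp (-t ^ 2 / 2) := by
    have h := integral_gaussian_Ioi (1 / 2)
    rw [show π / (1 / 2) = 2 * π by ring] at h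
    have hsplit : ∀ u : ℝ, exp (-(t ^ 2 + u ^ 2) / 2) = exp (-t ^ 2 / 2) * exp (-(1 / 2) * u ^ 2) :=
      fun u => by rw [← exp_add]; ring_nf
    simp_rw [hsplit, integral_const_mul, h]
    ring
  rw [mul_cos_div_sin_image_Ioo ht, hgauss] at hsubst
  rw [hsubst]
  refine setIntegral_congr_fun measurableSet_Ioo fun ψ hψ => ?_
  have hsin := (sin_pos_of_mem_Ioo_pi_div_two hψ).ne'
  simp only [f, rayleighPDF, smul_eq_mul, div_pow, mul_pow, cos_sq']
  field_simp
  ring_nf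

lemma integrable_rayleighPDF_sin_prod {x : ℝ} (hx : 0 ≤ x) :
    Integrable (Function.uncurry fun t ψ => rayleighPDF (sin ψ) t)
      ((volume.restrict (Ioi x)).prod (volume.restrict (Ioo 0 (π / 2)))) := by
  have hmeas : Measurable (Function.uncurry fun t ψ : ℝ => rayleighPDF (sin ψ) t) :=
    measurable_rayleighPDF.comp (measurable_snd.sin.prodMk measurable_fst)
  refine (integrable_prod_iff' hmeas.aestronglyMeasurable).mpr ⟨?_, ?_⟩
  · filter_upwards [ae_restrict_mem measurableSet_Ioo] with ψ hψ
    exact (integrable_rayleighPDF (sin_pos_of_mem_Ioo_pi_div_two hψ).ne').integrableOn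
  · have hbdd : Integrable (fun ψ => exp (-x ^ 2 / (2 * sin ψ ^ 2)))
        (volume.restrict (Ioo 0 (π / 2))) :=
      .of_bound (Measurable.aestronglyMeasurable (by fun_prop)) 1 (Eventually.of_forall fun ψ => by
        rw [norm_of_nonneg (exp_pos _).le]; exact exp_neg_sq_div_le_one x (sin ψ))
    refine hbdd.congr ?_
    filter_upwards [ae_restrict_mem measurableSet_Ioo] with ψ hψ
    rw [← integral_Ioi_rayleighPDF (sin_pos_of_mem_Ioo_pi_div_two hψ).ne']
    refine setIntegral_congr_fun measurableSet_Ioi fun t ht => ?_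
    simp only [rayleighPDF]
    exact (norm_of_nonneg (by have : 0 < t := hx.trans_lt ht; positivity)).symm

theorem gaussQ_eq_craig {x : ℝ} (hx : 0 ≤ x) :
    gaussQ x = 1 / π * ∫ ψ in Ioo 0 (π / 2), exp (-x ^ 2 / (2 * sin ψ ^ 2)) := by
  have hswap : ∫ ψ in Ioo 0 (π / 2), exp (-x ^ 2 / (2 * sin ψ ^ 2)) =
      √(2 * π) / 2 * ∫ t in Ioi x, exp (-t ^ 2 / 2) := calc
    _ = ∫ ψ in Ioo 0 (π / 2), ∫ t in Ioi x, rayleighPDF (sin ψ) t :=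
      setIntegral_congr_fun measurableSet_Ioo fun ψ hψ =>
        (integral_Ioi_rayleighPDF (sin_pos_of_mem_Ioo_pi_div_two hψ).ne' x).symm
    _ = ∫ t in Ioi x, ∫ ψ in Ioo 0 (π / 2), rayleighPDF (sin ψ) t :=
      (integral_integral_swap (integrable_rayleighPDF_sin_prod hx)).symm
    _ = ∫ t in Ioi x, √(2 * π) / 2 * exp (-t ^ 2 / 2) :=
      setIntegral_congr_fun measurableSet_Ioi fun t ht =>
        integral_Ioo_rayleighPDF_sin (hx.trans_lt ht)
    _ = _ := integral_const_mul _ _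
  have hsqrt : √(2 * π) ^ 2 = 2 * π := sq_sqrt (by positivity)
  rw [gaussQ, hswap, ← mul_assoc]
  congr 1
  field_simp
  linear_combination -hsqrt

lemma integral_integral_mul_swap_of_norm_le {X Y : Type*} [MeasurableSpace X] [MeasurableSpace Y]
    {μ : Measure X} {ν : Measure Y} [SFinite μ] [IsFiniteMeasure ν] {f : X → ℝ} {g : X → Y → ℝ}
    (hf : Integrable f μ) (hg : AEStronglyMeasurable (Function.uncurry g) (μ.prod ν)) {C : ℝ}
    (hC : ∀ x y, ‖g x y‖ ≤ C) :
    ∫ x, (∫ y, g x y ∂ν) * f x ∂μ = ∫ y, ∫ x, g x y * f x ∂μ ∂ν := by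
  have hint : Integrable (Function.uncurry fun x y => g x y * f x) (μ.prod ν) := by
    refine ((hf.norm.mul_prod (integrable_const C)).mono' (hg.mul hf.1.comp_fst) ?_)
    refine Eventually.of_forall fun p => ?_
    change ‖g p.1 p.2 * f p.1‖ ≤ _
    rw [norm_mul, mul_comm ‖f p.1‖]
    exact mul_le_mul_of_nonneg_right (hC p.1 p.2) (norm_nonneg _)
  simp_rw [← integral_mul_const]
  exact integral_integral_swap hint

noncomputable def gammaDensity (α β d : ℝ) : ℝ := d ^ (α - 1) * exp (-d / β) / (Gamma α * β ^ α)

section Gamma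

variable {α β : ℝ}

lemma integrableOn_gammaDensity (hα : 0 < α) (hβ : 0 < β) :
    IntegrableOn (gammaDensity α β) (Ioi 0) := by
  have h := integrableOn_rpow_mul_exp_neg_mul_rpow (s := α - 1) (p := 1) (b := 1 / β)
    (by linarith) one_pos (by positivity)
  refine IntegrableOn.congr_fun (h.div_const (Gamma α * β ^ α)) (fun d _ => ?_) measurableSet_Ioi
  simp only [gammaDensity, rpow_one]
  ring_nf

lemma integral_exp_neg_mul_mul_gammaDensity (hα : 0 < α) (hβ : 0 < β) {s : ℝ}
    (hs : 0 < 1 + β * s) :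
    ∫ d in Ioi 0, exp (-(s * d)) * gammaDensity α β d = (1 / (1 + β * s)) ^ α := by
  have hr : 0 < (1 + β * s) / β := by positivity
  have hexp : ∀ d, exp (-(s * d)) * gammaDensity α β d =
      d ^ (α - 1) * exp (-((1 + β * s) / β * d)) / (Gamma α * β ^ α) := fun d => by
    rw [gammaDensity, mul_div_assoc', ← mul_assoc, mul_comm (exp _), mul_assoc, ← exp_add]
    congr 3
    field_simp
    ring
  simp_rw [hexp, integral_div, integral_rpow_mul_exp_neg_mul_Ioi hα hr]
  rw [mul_comm (Gamma α), mul_div_mul_right _ _ (Gamma_pos_of_pos hα).ne',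
    ← div_rpow (by positivity) hβ.le]
  congr 1
  field_simp

/- The square root is kept so that the kernel is bounded by 1 for every `d`, as the exchange of
integrals in `gamma_average_pep` requires. -/
lemma integral_exp_neg_sqrt_sq_div_mul_gammaDensity (hα : 0 < α) (hβ : 0 < β) (σ : ℝ)
    {a : ℝ} (ha : a ≠ 0) :
    ∫ d in Ioi 0, exp (-√(d / (2 * σ ^ 2)) ^ 2 / (2 * a ^ 2)) * gammaDensity α β d =
      (a ^ 2 / (a ^ 2 + β / (4 * σ ^ 2))) ^ α := by
  have hs : 0 < 1 + β * (1 / (4 * σ ^ 2 * a ^ 2)) := by positivity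
  have hrhs : a ^ 2 / (a ^ 2 + β / (4 * σ ^ 2)) = 1 / (1 + β * (1 / (4 * σ ^ 2 * a ^ 2))) := by
    rw [mul_one_div, ← div_div β (4 * σ ^ 2), one_add_div (pow_ne_zero 2 ha), one_div_div]
  rw [hrhs, ← integral_exp_neg_mul_mul_gammaDensity hα hβ hs]
  refine setIntegral_congr_fun measurableSet_Ioi fun d hd => ?_
  have hd : 0 ≤ d := le_of_lt hd
  rw [sq_sqrt (by positivity)]
  ring_nf

end Gamma

theorem gamma_average_pep_general (α β σ : ℝ) (hα : 0 < α) (hβ : 0 < β) :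
    ∫ d in Ioi (0:ℝ), gaussQ (Real.sqrt (d / (2 * σ ^ 2))) *
        (d ^ (α - 1) * Real.exp (-d / β) / (Real.Gamma α * β ^ α)) =
      (1 / π) * ∫ ψ in (0:ℝ)..(π / 2),
        (Real.sin ψ ^ 2 / (Real.sin ψ ^ 2 + β / (4 * σ ^ 2))) ^ α := by
  change ∫ d in Ioi 0, gaussQ (√(d / (2 * σ ^ 2))) * gammaDensity α β d = _
  calc _ = ∫ d in Ioi 0, 1 / π * ((∫ ψ in Ioo 0 (π / 2),
          exp (-√(d / (2 * σ ^ 2)) ^ 2 / (2 * sin ψ ^ 2))) * gammaDensity α β d) := by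
        simp_rw [gaussQ_eq_craig (sqrt_nonneg _), mul_assoc]
    _ = 1 / π * ∫ ψ in Ioo 0 (π / 2), ∫ d in Ioi 0,
          exp (-√(d / (2 * σ ^ 2)) ^ 2 / (2 * sin ψ ^ 2)) * gammaDensity α β d := by
        rw [integral_const_mul, integral_integral_mul_swap_of_norm_le
          (integrableOn_gammaDensity hα hβ) (Measurable.aestronglyMeasurable (by fun_prop))
          (C := 1) fun d ψ => ?_]
        rw [norm_of_nonneg (exp_pos _).le]
        exact exp_neg_sq_div_le_one _ _
    _ = _ := by
        rw [setIntegral_congr_fun measurableSet_Ioo fun ψ hψ =>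
            integral_exp_neg_sqrt_sq_div_mul_gammaDensity hα hβ σ
              (sin_pos_of_mem_Ioo_pi_div_two hψ).ne',
          intervalIntegral.integral_of_le (by positivity), integral_Ioc_eq_integral_Ioo]

/-- Average PEP over a Gamma(α,β) squared distance D:
    E[Q(√(D/(2σ²)))] = (1/π) ∫₀^{π/2} (sin²ψ/(sin²ψ+γ))^α dψ with γ = β/(4σ²). -/
theorem gamma_average_pep (α β σ : ℝ) (hα : 0 < α) (hβ : 0 < β) (hσ : 0 < σ) :
    ∫ d in Ioi (0:ℝ), gaussQ (Real.sqrt (d / (2 * σ ^ 2))) *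
        (d ^ (α - 1) * Real.exp (-d / β) / (Real.Gamma α * β ^ α)) =
      (1 / π) * ∫ ψ in (0:ℝ)..(π / 2),
        (Real.sin ψ ^ 2 / (Real.sin ψ ^ 2 + β / (4 * σ ^ 2))) ^ α :=
  gamma_average_pep_general α β σ hα hβ
end
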